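/- Let G(x) = ∑ a_n² xⁿ with a_n ≥ 0, a_0 > 0, entire, and define b(x) = (d²/dt²) log G(eᵗ) evaluated at t = log x for x > 0. Then for all real 0 < r ≤ s and L > 0, G(L²rs)² / (G(L²r²)·G(L²s²)) ≤ exp(−(log(s/r))² · min_{x ∈ [L²r², L²s²]} b(x)). -/

import Mathlib

theorem kernel_offdiag_bound (c : ℕ → ℝ) (hc : ∀ n, 0 ≤ c n) (hc0 : 0 < c 0)
    (hsum : ∀ r : ℝ, Summable (fun n => c n * r ^ n))
    (G : ℝ → ℝ) (hG : ∀ r : ℝ, G r = ∑' n, c n * r ^ n)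
    (b : ℝ → ℝ)
    (hb : ∀ x : ℝ, 0 < x →
      b x = iteratedDeriv 2 (fun t : ℝ => Real.log (G (Real.exp t))) (Real.log x))
    (r s L : ℝ) (hr : 0 < r) (hrs : r ≤ s) (hL : 0 < L) :
    G (L ^ 2 * r * s) ^ 2 / (G (L ^ 2 * r ^ 2) * G (L ^ 2 * s ^ 2)) ≤
      Real.exp (-(Real.log (s / r)) ^ 2 * sInf (b '' Set.Icc (L ^ 2 * r ^ 2) (L ^ 2 * s ^ 2))) := by
  have hs : 0 < s := lt_of_lt_of_le hr hrs
  -- positivity of G on nonnegative reals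
  have hGpos : ∀ x : ℝ, 0 ≤ x → 0 < G x := by
    intro x hx
    rw [hG]
    calc (0:ℝ) < c 0 * x ^ 0 := by simpa using hc0
      _ ≤ ∑' n, c n * x ^ n :=
        (hsum x).le_tsum 0 (fun n _ => mul_nonneg (hc n) (pow_nonneg hx n))
  -- G is the sum of a power series with infinite radius
  set p := FormalMultilinearSeries.ofScalars ℝ c with hpdef
  have hrad : p.radius = ⊤ := by
    apply p.radius_eq_top_of_summable_norm
    intro r'
    refine (hsum r').congr fun n => ?_
    simp only [hpdef, FormalMultilinearSeries.ofScalars_norm, Real.norm_eq_abs,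
      abs_of_nonneg (hc n)]
  have hGeq : G = p.sum := by
    funext x
    rw [hG x]
    rw [show p.sum x = ∑' n, c n • x ^ n from FormalMultilinearSeries.ofScalars_sum_eq c x]
    simp [smul_eq_mul]
  have hball : HasFPowerSeriesOnBall G p 0 ⊤ := by
    rw [hGeq, ← hrad]
    exact p.hasFPowerSeriesOnBall (by rw [hrad]; exact ENNReal.zero_lt_top)
  have hGan : ∀ x : ℝ, AnalyticAt ℝ G x := fun x =>
    hball.analyticAt_of_mem (by simp [edist_lt_top])
  set F : ℝ → ℝ := fun t : ℝ => Real.log (G (Real.exp t)) with hFdef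
  have hF : ContDiff ℝ (⊤ : ℕ∞) F := by
    rw [contDiff_iff_contDiffAt]
    intro t
    exact ContDiffAt.log ((hGan _).contDiffAt.comp t Real.contDiff_exp.contDiffAt)
      (ne_of_gt (hGpos _ (Real.exp_pos t).le))
  have hF1 : Differentiable ℝ F := hF.differentiable (by simp)
  have hF' : ContDiff ℝ (⊤ : ℕ∞) (deriv F) := (contDiff_infty_iff_deriv.mp hF).2
  have hF'd : Differentiable ℝ (deriv F) := hF'.differentiable (by simp)
  have hF''c : Continuous (deriv (deriv F)) := (contDiff_infty_iff_deriv.mp hF').2.continuous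
  have hiter : ∀ t : ℝ, iteratedDeriv 2 F t = deriv (deriv F) t := by
    intro t
    rw [iteratedDeriv_succ, iteratedDeriv_one]
  -- abbreviations
  set x₁ := L ^ 2 * r ^ 2 with hx₁def
  set x₂ := L ^ 2 * s ^ 2 with hx₂def
  set xm := L ^ 2 * r * s with hxmdef
  have hx₁ : 0 < x₁ := by positivity
  have hx₂ : 0 < x₂ := by positivity
  have hxm : 0 < xm := by positivity
  have hx12 : x₁ ≤ x₂ := by nlinarith
  set t₁ := Real.log x₁ with ht₁def
  set t₂ := Real.log x₂ with ht₂def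
  have ht12 : t₁ ≤ t₂ := Real.log_le_log hx₁ hx12
  have htm : Real.log xm = (t₁ + t₂) / 2 := by
    have h1 : Real.log (xm ^ 2) = Real.log x₁ + Real.log x₂ := by
      rw [show xm ^ 2 = x₁ * x₂ by ring]
      exact Real.log_mul (ne_of_gt hx₁) (ne_of_gt hx₂)
    rw [Real.log_pow] at h1
    push_cast at h1
    linarith
  have hq : t₂ - t₁ = 2 * Real.log (s / r) := by
    have h1 : t₁ = 2 * Real.log L + 2 * Real.log r := by
      rw [ht₁def, hx₁def, Real.log_mul (by positivity) (by positivity), Real.log_pow,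
        Real.log_pow]
      push_cast; ring
    have h2 : t₂ = 2 * Real.log L + 2 * Real.log s := by
      rw [ht₂def, hx₂def, Real.log_mul (by positivity) (by positivity), Real.log_pow,
        Real.log_pow]
      push_cast; ring
    rw [Real.log_div (ne_of_gt hs) (ne_of_gt hr)]
    linarith
  -- the infimum
  set m := sInf (b '' Set.Icc x₁ x₂) with hmdef
  have hbeq : ∀ x ∈ Set.Icc x₁ x₂, b x = deriv (deriv F) (Real.log x) := by
    intro x hx
    rw [hb x (lt_of_lt_of_le hx₁ hx.1), hiter]
  have hbc : ContinuousOn b (Set.Icc x₁ x₂) := by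
    have h0 : ContinuousOn (fun x => deriv (deriv F) (Real.log x)) (Set.Icc x₁ x₂) :=
      hF''c.comp_continuousOn (Real.continuousOn_log.mono
        (fun x hx => ne_of_gt (lt_of_lt_of_le hx₁ hx.1)))
    exact h0.congr hbeq
  have hbdd : BddBelow (b '' Set.Icc x₁ x₂) :=
    (isCompact_Icc.image_of_continuousOn hbc).bddBelow
  have hm : ∀ x ∈ Set.Icc x₁ x₂, m ≤ b x := fun x hx => csInf_le hbdd ⟨x, hx, rfl⟩
  -- F'' ≥ m on [t₁, t₂]
  have hF''ge : ∀ t ∈ Set.Icc t₁ t₂, m ≤ deriv (deriv F) t := by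
    intro t ht
    have hmem : Real.exp t ∈ Set.Icc x₁ x₂ := by
      constructor
      · rw [← Real.exp_log hx₁]; exact Real.exp_le_exp.mpr ht.1
      · rw [← Real.exp_log hx₂]; exact Real.exp_le_exp.mpr ht.2
    have := hm _ hmem
    rwa [hbeq _ hmem, Real.log_exp] at this
  -- convexity of Φ = F - (m/2) t²
  set Φ : ℝ → ℝ := fun t => F t - m / 2 * t ^ 2 with hΦdef
  have hmt2 : Differentiable ℝ (fun t : ℝ => m / 2 * t ^ 2) :=
    (differentiable_pow 2).const_mul (m / 2)
  have hmt : Differentiable ℝ (fun t : ℝ => m * t) := differentiable_id.const_mul m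
  have hdΦ : deriv Φ = fun t => deriv F t - m * t := by
    funext t
    rw [hΦdef]
    rw [deriv_fun_sub (hF1 t) (hmt2 t)]
    have h5 : deriv (fun t : ℝ => m / 2 * t ^ 2) t = m * t := by
      rw [deriv_const_mul _ (differentiableAt_pow 2)]
      simp only [deriv_pow_field]
      push_cast; ring
    rw [h5]
  have hΦconv : ConvexOn ℝ (Set.Icc t₁ t₂) Φ := by
    apply convexOn_of_deriv2_nonneg (convex_Icc t₁ t₂)
    · exact (hF.continuous.sub hmt2.continuous).continuousOn
    · exact (hF1.sub hmt2).differentiableOn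
    · rw [hdΦ]
      exact (hF'd.sub hmt).differentiableOn
    · intro t ht
      have ht' : t ∈ Set.Icc t₁ t₂ := interior_subset ht
      have h2 : deriv^[2] Φ t = deriv (deriv Φ) t := by
        rw [Function.iterate_succ_apply', Function.iterate_one]
      rw [h2, hdΦ]
      rw [deriv_fun_sub (hF'd t) (hmt t)]
      have h6 : deriv (fun t : ℝ => m * t) t = m := by
        simpa using ((hasDerivAt_id t).const_mul m).deriv
      rw [h6]
      have := hF''ge t ht'
      linarith
  -- midpoint inequality
  have ht₁mem : t₁ ∈ Set.Icc t₁ t₂ := ⟨le_refl _, ht12⟩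
  have ht₂mem : t₂ ∈ Set.Icc t₁ t₂ := ⟨ht12, le_refl _⟩
  have hmid := hΦconv.2 ht₁mem ht₂mem (by norm_num : (0:ℝ) ≤ 1/2)
    (by norm_num : (0:ℝ) ≤ 1/2) (by norm_num)
  simp only [smul_eq_mul] at hmid
  have hmid' : Φ ((t₁ + t₂)/2) ≤ 1/2 * Φ t₁ + 1/2 * Φ t₂ := by
    have h7 : (1/2 : ℝ) * t₁ + 1/2 * t₂ = (t₁ + t₂)/2 := by ring
    rw [h7] at hmid
    exact hmid
  have hmid'' : F ((t₁ + t₂)/2) - m/2 * ((t₁+t₂)/2)^2 ≤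
      1/2 * (F t₁ - m/2 * t₁^2) + 1/2 * (F t₂ - m/2 * t₂^2) := by
    simpa only [hΦdef] using hmid'
  -- rewrite G in terms of F
  have hFx : ∀ x : ℝ, 0 < x → G x = Real.exp (F (Real.log x)) := by
    intro x hx
    rw [hFdef]
    simp only
    rw [Real.exp_log hx, Real.exp_log (hGpos x hx.le)]
  rw [hFx x₁ hx₁, hFx x₂ hx₂, hFx xm hxm, htm]
  rw [sq, ← Real.exp_add, ← Real.exp_add, ← Real.exp_sub]
  apply Real.exp_le_exp.mpr
  have hq' : Real.log (s / r) = (t₂ - t₁) / 2 := by linarith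
  rw [hq']
  nlinarith [hmid'']
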